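/- arXiv:1011.3992 — 3 statements merged into one kernel-verified Lean document; each statement's English description precedes it below -/
import Mathlib

section
/- Let a finitely generated group G act on a set T, and let x ∈ T have orbit with sub-exponential growth, i.e., setting A_n = {g·x : word length of g ≤ n}, lim inf_{n→∞} |A_{n+1} \ A_{n-1}| / |A_n| = 0. Then there is a subsequence (A_{n_k}) that is an averaging (Følner) sequence: for every generator s, |Δ_s A_{n_k}| / |A_{n_k}| → 0, where Δ_s A = {y ∈ A : s·y ∉ A} ∪ {y ∉ A : s·y ∈ A}. -/
/-!
The boundary of the ball `A n` along a generator `s` lies in the annulus `A (n + 1) \ A (n - 1)`: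
a point of `A n` moved out by `s` cannot lie in `A (n - 1)`, and a point outside `A n` moved in by
`s` lies in `A (n + 1)` because `s⁻¹` is a generator too. So the Følner ratios of `A n` are
dominated by the annulus ratios, and any subsequence along which these tend to their liminf `0`
works. The annulus ratios are bounded by `|S| + 1`; without such a bound their liminf in `ℝ`
would be a junk value.
-/

open Filter Topology Pointwise

theorem Filter.exists_strictMono_tendsto_liminf {α : Type*} [ConditionallyCompleteLinearOrder α]
    [TopologicalSpace α] [FirstCountableTopology α] [OrderTopology α] {u : ℕ → α}
    (hc : IsCoboundedUnder (· ≥ ·) atTop u) (hb : IsBoundedUnder (· ≥ ·) atTop u) :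
    ∃ φ : ℕ → ℕ, StrictMono φ ∧ Tendsto (u ∘ φ) atTop (𝓝 (liminf u atTop)) := by
  obtain ⟨x, hux, hx⟩ := exists_seq_tendsto_liminf hc hb
  obtain ⟨ψ, hψ, hxψ⟩ := strictMono_subseq_of_tendsto_atTop hx
  exact ⟨x ∘ ψ, hxψ, hux.comp hψ.tendsto_atTop⟩

namespace MulAction

variable {G T : Type*} [Group G] [MulAction G T]

def orbitBall (S : Set G) (x : T) (n : ℕ) : Set T :=
  {y | ∃ g : G,
    (∃ l : List G, (∀ s ∈ l, s ∈ S) ∧ l.length ≤ n ∧ l.prod = g) ∧ g • x = y}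

def smulBoundary (s : G) (A : Set T) : Set T :=
  {y | y ∈ A ∧ s • y ∉ A} ∪ {y | y ∉ A ∧ s • y ∈ A}

section orbitBall

variable {S : Set G} {x : T}

theorem orbitBall_zero : orbitBall S x 0 = {x} := by
  ext y
  simp [orbitBall, eq_comm]

theorem orbitBall_mono : Monotone (orbitBall S x) := by
  rintro m n hmn y ⟨g, ⟨l, hlS, hl, rfl⟩, rfl⟩
  exact ⟨_, ⟨l, hlS, hl.trans hmn, rfl⟩, rfl⟩

theorem mem_orbitBall_self (n : ℕ) : x ∈ orbitBall S x n :=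
  ⟨1, ⟨[], by simp, by simp, rfl⟩, one_smul _ _⟩

theorem smul_mem_orbitBall_succ {s : G} (hs : s ∈ S) {n : ℕ} {y : T}
    (hy : y ∈ orbitBall S x n) : s • y ∈ orbitBall S x (n + 1) := by
  obtain ⟨g, ⟨l, hlS, hl, rfl⟩, rfl⟩ := hy
  refine ⟨s * l.prod, ⟨s :: l, ?_, by simpa using hl, rfl⟩, mul_smul _ _ _⟩
  simpa [hs] using hlS

theorem orbitBall_succ_subset (n : ℕ) :
    orbitBall S x (n + 1) ⊆ orbitBall S x n ∪ ⋃ s ∈ S, s • orbitBall S x n := by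
  rintro y ⟨g, ⟨l, hlS, hl, rfl⟩, rfl⟩
  cases l with
  | nil => exact Or.inl (by simpa using mem_orbitBall_self n)
  | cons s l =>
    refine Or.inr (Set.mem_biUnion (hlS s List.mem_cons_self) ⟨l.prod • x, ?_, ?_⟩)
    · exact ⟨_, ⟨l, fun t ht => hlS t (List.mem_cons_of_mem _ ht), by simpa using hl, rfl⟩,
        rfl⟩
    · simp [mul_smul]

theorem smulBoundary_orbitBall_subset {s : G} (hs : s ∈ S) (hs' : s⁻¹ ∈ S) {n : ℕ}
    (hn : 1 ≤ n) :
    smulBoundary s (orbitBall S x n) ⊆ orbitBall S x (n + 1) \ orbitBall S x (n - 1) := by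
  rintro y (⟨hy, hsy⟩ | ⟨hy, hsy⟩)
  · refine ⟨orbitBall_mono n.le_succ hy, fun hy' => hsy ?_⟩
    simpa [Nat.sub_add_cancel hn] using smul_mem_orbitBall_succ hs hy'
  · exact ⟨by simpa using smul_mem_orbitBall_succ hs' hsy,
      fun hy' => hy (orbitBall_mono (n.sub_le 1) hy')⟩

end orbitBall

section Finite

variable (S : Finset G) (x : T)

theorem orbitBall_finite (n : ℕ) : (orbitBall (S : Set G) x n).Finite := by
  induction n with
  | zero => simp [orbitBall_zero]
  | succ n ih =>
    refine (ih.union ?_).subset (orbitBall_succ_subset n)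
    exact S.finite_toSet.biUnion fun s _ => ih.smul_set

theorem ncard_orbitBall_succ_le (n : ℕ) :
    (orbitBall (S : Set G) x (n + 1)).ncard ≤
      (S.card + 1) * (orbitBall (S : Set G) x n).ncard := by
  set B := orbitBall (S : Set G) x n
  have hunion : (B ∪ ⋃ s ∈ S, s • B).Finite :=
    (orbitBall_finite S x n).union
      (S.finite_toSet.biUnion fun s _ => (orbitBall_finite S x n).smul_set)
  calc (orbitBall (S : Set G) x (n + 1)).ncard
      ≤ (B ∪ ⋃ s ∈ S, s • B).ncard := Set.ncard_le_ncard (orbitBall_succ_subset n) hunion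
    _ ≤ B.ncard + ∑ s ∈ S, (s • B).ncard :=
        (Set.ncard_union_le _ _).trans (Nat.add_le_add_left (S.set_ncard_biUnion_le _) _)
    _ = (S.card + 1) * B.ncard := by simp [Set.ncard_smul_set, add_mul, add_comm]

theorem ncard_orbitBall_annulus_le (n : ℕ) :
    (orbitBall (S : Set G) x (n + 1) \ orbitBall (S : Set G) x (n - 1)).ncard ≤
      (S.card + 1) * (orbitBall (S : Set G) x n).ncard :=
  (Set.ncard_le_ncard Set.sdiff_subset (orbitBall_finite S x _)).trans
    (ncard_orbitBall_succ_le S x n)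

theorem ncard_smulBoundary_orbitBall_le {s : G} (hs : s ∈ S) (hs' : s⁻¹ ∈ S) {n : ℕ}
    (hn : 1 ≤ n) :
    (smulBoundary s (orbitBall (S : Set G) x n)).ncard ≤
      (orbitBall (S : Set G) x (n + 1) \ orbitBall (S : Set G) x (n - 1)).ncard :=
  Set.ncard_le_ncard (smulBoundary_orbitBall_subset hs hs' hn) (orbitBall_finite S x _).sdiff

end Finite

end MulAction

open MulAction

theorem stmt1_general {G T : Type*} [Group G] [MulAction G T]
    (S : Finset G) (hsym : ∀ s ∈ S, s⁻¹ ∈ S)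
    (x : T) (A : ℕ → Set T)
    (hA : ∀ n, A n = {y | ∃ g : G,
      (∃ l : List G, (∀ s ∈ l, s ∈ S) ∧ l.length ≤ n ∧ l.prod = g) ∧ g • x = y})
    (hsub : Filter.atTop.liminf
        (fun n => ((A (n + 1) \ A (n - 1)).ncard : ℝ) / (A n).ncard) = 0) :
    ∃ φ : ℕ → ℕ, StrictMono φ ∧ ∀ s ∈ S,
      Tendsto (fun k =>
          ((({y | y ∈ A (φ k) ∧ s • y ∉ A (φ k)} ∪
              {y | y ∉ A (φ k) ∧ s • y ∈ A (φ k)} : Set T)).ncard : ℝ) / (A (φ k)).ncard)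
        atTop (𝓝 0) := by
  obtain rfl : A = orbitBall (S : Set G) x := funext hA
  set f : ℕ → ℝ := fun n =>
    ((orbitBall (S : Set G) x (n + 1) \ orbitBall (S : Set G) x (n - 1)).ncard : ℝ) /
      (orbitBall (S : Set G) x n).ncard
  have hf_le : ∀ n, f n ≤ S.card + 1 := fun n => by
    refine div_le_of_le_mul₀ (by positivity) (by positivity) ?_
    exact_mod_cast ncard_orbitBall_annulus_le S x n
  obtain ⟨φ, hφ, hfφ⟩ := exists_strictMono_tendsto_liminf (u := f)
    (isBoundedUnder_of ⟨_, hf_le⟩).isCoboundedUnder_ge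
    (isBoundedUnder_of ⟨0, fun n => by positivity⟩)
  rw [hsub] at hfφ
  refine ⟨φ, hφ, fun s hs => squeeze_zero' (.of_forall fun k => by positivity)
    ((eventually_ge_atTop 1).mono fun k hk => ?_) hfφ⟩
  refine div_le_div_of_nonneg_right ?_ (by positivity)
  exact_mod_cast ncard_smulBoundary_orbitBall_le S x hs (hsym s hs) (hk.trans (hφ.id_le k))

/-- If the orbit of `x` under a finitely generated group has sub-exponential growth
(liminf |A_{n+1} \ A_{n-1}|/|A_n| = 0, where A_n is the orbit ball of radius n),
then some subsequence of the balls is an averaging (Følner) sequence. -/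
theorem stmt1 {G T : Type*} [Group G] [MulAction G T]
    (S : Finset G) (hsym : ∀ s ∈ S, s⁻¹ ∈ S)
    (hgen : Subgroup.closure (S : Set G) = ⊤)
    (x : T) (A : ℕ → Set T)
    (hA : ∀ n, A n = {y | ∃ g : G,
      (∃ l : List G, (∀ s ∈ l, s ∈ S) ∧ l.length ≤ n ∧ l.prod = g) ∧ g • x = y})
    (hfin : ∀ n, (A n).Finite)
    (hsub : Filter.atTop.liminf
        (fun n => ((A (n + 1) \ A (n - 1)).ncard : ℝ) / (A n).ncard) = 0) :
    ∃ φ : ℕ → ℕ, StrictMono φ ∧ ∀ s ∈ S,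
      Tendsto (fun k =>
          ((({y | y ∈ A (φ k) ∧ s • y ∉ A (φ k)} ∪
              {y | y ∉ A (φ k) ∧ s • y ∈ A (φ k)} : Set T)).ncard : ℝ) / (A (φ k)).ncard)
        atTop (𝓝 0) :=
  stmt1_general S hsym x A hA hsub
end

section
/- Let x be an infinite reduced word in F₂ and define δ(γ⁻¹·x, x) = 3^{−b_x(γ)} and the weighted measure |A|_x = Σ 3^{−b_x(γ)} over γ⁻¹·x ∈ A. Set A_n^x = {γ⁻¹·x : 0 ≤ b_x(γ) = d(1,γ) ≤ n}. Then |A_n^x|_x = n + 1, while the weighted boundary satisfies |∂A_n^x|_x = 2; hence |∂A_n^x|_x / |A_n^x|_x → 0, i.e., (A_n^x) is a δ-averaging (δ-Følner) sequence. -/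
/-!
Along the reduced ray `x`, the Busemann function is `b(γ) = |γ| - 2·(length of the common prefix
of γ and x)`, so `b(γ) = |γ|` exactly when the reduced word of `γ` does not begin with `x 0`.
Hence `A_n` consists of the reduced words of length at most `n` avoiding the initial letter `x 0`.
Such words of length `k` are counted letter by letter: every letter has `3` admissible choices
(it must avoid `x 0`, resp. the inverse of its predecessor), so there are `3 ^ k` of them, each
of weight `3 ^ (-k)`. Every level therefore has total weight `1`, so `|A_n| = n + 1`, and the
boundary, the identity together with the top level, has weight `2`.
-/

open Filter Topology Finset

namespace FreeGroup

variable {α : Type*}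

theorem ne_invLetter_iff {a b : α × Bool} : b ≠ (a.1, !a.2) ↔ (a.1 = b.1 → a.2 = b.2) := by
  obtain ⟨a₁, a₂⟩ := a
  obtain ⟨b₁, b₂⟩ := b
  cases a₂ <;> cases b₂ <;> simp [eq_comm]

theorem isReduced_cons_iff {c : α × Bool} {L : List (α × Bool)} :
    IsReduced (c :: L) ↔ L.head? ≠ some (c.1, !c.2) ∧ IsReduced L := by
  cases L with
  | nil => simp
  | cons b L => simp [isReduced_cons_cons, ne_invLetter_iff]

theorem isReduced_ofFn_of_ne_invLetter {x : ℕ → α × Bool}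
    (hx : ∀ n, x (n + 1) ≠ ((x n).1, !(x n).2)) (n : ℕ) :
    IsReduced (List.ofFn fun i : Fin n => x i) :=
  List.isChain_ofFn.mpr fun i _ => ne_invLetter_iff.mp (hx i)

variable [DecidableEq α]

theorem norm_mk_of_isReduced {w : List (α × Bool)} (hw : IsReduced w) :
    norm (mk w) = w.length := by
  rw [norm, toWord_mk, hw.reduce_eq]

theorem norm_inv_mul_mk_of_head?_ne {γ : FreeGroup α} {w : List (α × Bool)} (hw : IsReduced w)
    (h : ∀ a ∈ w.head?, γ.toWord.head? ≠ some a) :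
    norm (γ⁻¹ * mk w) = norm γ + w.length := by
  have hjoin : IsReduced (invRev γ.toWord ++ w) := by
    refine List.IsChain.append (toWord_inv γ ▸ isReduced_toWord) hw ?_
    intro p hp q hq hpq
    rw [invRev, List.getLast?_reverse, List.head?_map] at hp
    obtain ⟨g, hg, rfl⟩ := Option.mem_map.mp hp
    refine (ne_invLetter_iff.mp ?_ hpq)
    rintro rfl
    exact h _ hq (by simpa using hg)
  rw [← mk_toWord (x := γ), inv_mk, mul_mk, norm_mk_of_isReduced hjoin, List.length_append,
    invRev_length, norm, toWord_mk, isReduced_toWord.reduce_eq]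

theorem norm_inv_mul_mk_cons_add_two_le {γ : FreeGroup α} {a : α × Bool} (v : List (α × Bool))
    (hγ : γ.toWord.head? = some a) : norm (γ⁻¹ * mk (a :: v)) + 2 ≤ norm γ + (v.length + 1) := by
  obtain ⟨u, hu⟩ : ∃ u, γ.toWord = a :: u := List.head?_eq_some_iff.mp hγ
  have hcancel : γ⁻¹ * mk (a :: v) = (mk u)⁻¹ * mk v := by
    rw [← mk_toWord (x := γ), hu, ← List.singleton_append, ← mul_mk,
      ← List.singleton_append (l := v), ← mul_mk]
    group
  have hγu : norm γ = u.length + 1 := by rw [norm, hu, List.length_cons]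
  have := (norm_mul_le (mk u)⁻¹ (mk v)).trans
    (add_le_add (norm_inv_eq.trans_le norm_mk_le) norm_mk_le)
  rw [hcancel]
  omega

section Busemann

variable {x : ℕ → α × Bool} (hx : ∀ n, x (n + 1) ≠ ((x n).1, !(x n).2)) {γ : FreeGroup α} {β : ℤ}
  (hβ : Tendsto (fun n => (norm (γ⁻¹ * mk (List.ofFn fun i : Fin n => x i)) : ℤ) -
    norm (mk (List.ofFn fun i : Fin n => x i))) atTop (𝓝 β))
include hx hβ

theorem busemann_eq_norm_of_head?_ne (hγ : γ.toWord.head? ≠ some (x 0)) : β = norm γ := by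
  refine tendsto_nhds_unique hβ (tendsto_const_nhds.congr fun n => ?_)
  have hhead : ∀ a ∈ (List.ofFn fun i : Fin n => x i).head?, γ.toWord.head? ≠ some a := by
    cases n with
    | zero => simp
    | succ n => simpa [List.ofFn_succ] using hγ
  rw [norm_inv_mul_mk_of_head?_ne (isReduced_ofFn_of_ne_invLetter hx n) hhead,
    norm_mk_of_isReduced (isReduced_ofFn_of_ne_invLetter hx n)]
  push_cast
  ring

theorem busemann_le_norm_sub_two_of_head?_eq (hγ : γ.toWord.head? = some (x 0)) :
    β ≤ norm γ - 2 := by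
  refine le_of_tendsto hβ (eventually_atTop.mpr ⟨1, fun n hn => ?_⟩)
  obtain ⟨k, rfl⟩ := Nat.exists_eq_add_of_le' hn
  have hle := norm_inv_mul_mk_cons_add_two_le (List.ofFn fun i : Fin k => x (i + 1)) hγ
  rw [List.length_ofFn] at hle
  rw [norm_mk_of_isReduced (isReduced_ofFn_of_ne_invLetter hx (k + 1)), List.length_ofFn,
    List.ofFn_succ]
  simp only [Fin.val_succ, Fin.val_zero]
  omega

theorem busemann_eq_norm_iff : β = norm γ ↔ γ.toWord.head? ≠ some (x 0) := by
  refine ⟨fun hβγ hγ => ?_, busemann_eq_norm_of_head?_ne hx hβ⟩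
  have := busemann_le_norm_sub_two_of_head?_eq hx hβ hγ
  omega

end Busemann

section Counting

variable [Fintype α]

def reducedWordsAvoiding : ℕ → α × Bool → Finset (List (α × Bool))
  | 0, _ => {[]}
  | k + 1, a => (univ.erase a).biUnion fun c => (reducedWordsAvoiding k (c.1, !c.2)).image (c :: ·)

theorem mem_reducedWordsAvoiding {k : ℕ} {a : α × Bool} {L : List (α × Bool)} :
    L ∈ reducedWordsAvoiding k a ↔ IsReduced L ∧ L.length = k ∧ L.head? ≠ some a := by
  induction k generalizing a L with
  | zero => cases L <;> simp [reducedWordsAvoiding]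
  | succ k ih =>
    cases L with
    | nil => simp [reducedWordsAvoiding]
    | cons c L => simp [reducedWordsAvoiding, ih, isReduced_cons_iff]; tauto

theorem card_reducedWordsAvoiding (k : ℕ) (a : α × Bool) :
    #(reducedWordsAvoiding k a) = (2 * Fintype.card α - 1) ^ k := by
  induction k generalizing a with
  | zero => rfl
  | succ k ih =>
    rw [reducedWordsAvoiding, card_biUnion,
      sum_congr rfl fun c _ => card_image_of_injective _ List.cons_injective]
    · simp [ih, card_erase_of_mem, pow_succ, mul_comm]
    · intro c _ c' _ hcc'
      simp only [Function.onFun, disjoint_left, mem_image]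
      rintro _ ⟨L, -, rfl⟩ ⟨L', -, hL'⟩
      exact hcc' (List.cons_eq_cons.mp hL').1.symm

def sphereAvoiding (a : α × Bool) (k : ℕ) : Finset (FreeGroup α) :=
  (reducedWordsAvoiding k a).image mk

theorem mem_sphereAvoiding {a : α × Bool} {k : ℕ} {γ : FreeGroup α} :
    γ ∈ sphereAvoiding a k ↔ norm γ = k ∧ γ.toWord.head? ≠ some a := by
  simp only [sphereAvoiding, mem_image, mem_reducedWordsAvoiding]
  constructor
  · rintro ⟨L, ⟨hL, hlen, hhead⟩, rfl⟩
    rw [norm, toWord_mk, hL.reduce_eq]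
    exact ⟨hlen, hhead⟩
  · rintro ⟨hlen, hhead⟩
    exact ⟨γ.toWord, ⟨isReduced_toWord, hlen, hhead⟩, mk_toWord⟩

theorem card_sphereAvoiding (a : α × Bool) (k : ℕ) :
    #(sphereAvoiding a k) = (2 * Fintype.card α - 1) ^ k := by
  rw [sphereAvoiding, card_image_of_injOn, card_reducedWordsAvoiding]
  intro L hL L' hL' h
  rw [mem_coe, mem_reducedWordsAvoiding] at hL hL'
  rw [← hL.1.reduce_eq, ← hL'.1.reduce_eq, ← toWord_mk, h, toWord_mk]

def ballAvoiding (a : α × Bool) (n : ℕ) : Finset (FreeGroup α) :=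
  (range (n + 1)).biUnion (sphereAvoiding a)

theorem mem_ballAvoiding {a : α × Bool} {n : ℕ} {γ : FreeGroup α} :
    γ ∈ ballAvoiding a n ↔ norm γ ≤ n ∧ γ.toWord.head? ≠ some a := by
  simp [ballAvoiding, mem_sphereAvoiding]

variable [Nonempty α]

theorem sum_sphereAvoiding_zpow_neg_norm (a : α × Bool) (k : ℕ) :
    ∑ γ ∈ sphereAvoiding a k, ((2 * Fintype.card α - 1 : ℕ) : ℝ) ^ (-(norm γ : ℤ)) = 1 := by
  have hq : ((2 * Fintype.card α - 1 : ℕ) : ℝ) ≠ 0 := by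
    have := Fintype.card_pos (α := α)
    norm_cast
    omega
  rw [sum_congr rfl fun γ hγ => by rw [(mem_sphereAvoiding.mp hγ).1], sum_const,
    card_sphereAvoiding, nsmul_eq_mul, zpow_neg, zpow_natCast]
  push_cast
  exact mul_inv_cancel₀ (pow_ne_zero _ hq)

theorem sum_ballAvoiding_zpow_neg_norm (a : α × Bool) (n : ℕ) :
    ∑ γ ∈ ballAvoiding a n, ((2 * Fintype.card α - 1 : ℕ) : ℝ) ^ (-(norm γ : ℤ)) = n + 1 := by
  rw [ballAvoiding, sum_biUnion, sum_congr rfl fun k _ => sum_sphereAvoiding_zpow_neg_norm a k]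
  · simp
  · intro k _ l _ hkl
    refine disjoint_left.mpr fun γ hk hl => hkl ?_
    rw [← (mem_sphereAvoiding.mp hk).1, (mem_sphereAvoiding.mp hl).1]

end Counting

section BusemannSets

variable [Fintype α] {b : FreeGroup α → ℤ} {a : α × Bool}
  (hb : ∀ γ, b γ = norm γ ↔ γ.toWord.head? ≠ some a)
include hb

theorem setOf_busemann_eq_norm_le_eq_ballAvoiding (n : ℕ) :
    {γ | b γ = norm γ ∧ norm γ ≤ n} = ballAvoiding a n := by
  ext γ
  rw [Set.mem_ofPred_eq, mem_coe, mem_ballAvoiding, hb, and_comm]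

theorem sep_busemann_eq_eq_sphereAvoiding (n : ℕ) :
    {γ ∈ {γ | b γ = norm γ ∧ norm γ ≤ n} | b γ = n} = sphereAvoiding a n := by
  ext γ
  rw [setOf_busemann_eq_norm_le_eq_ballAvoiding hb, Set.mem_sep_iff, mem_coe, mem_coe,
    mem_ballAvoiding, mem_sphereAvoiding]
  constructor
  · rintro ⟨⟨-, hhead⟩, hbn⟩
    exact ⟨by have := (hb γ).mpr hhead; omega, hhead⟩
  · rintro ⟨hnorm, hhead⟩
    exact ⟨⟨hnorm.le, hhead⟩, by rw [(hb γ).mpr hhead, hnorm]⟩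

theorem finsum_zpow_neg_busemann_setOf_eq_norm_le [Nonempty α] (n : ℕ) :
    ∑ᶠ γ ∈ {γ | b γ = norm γ ∧ norm γ ≤ n}, ((2 * Fintype.card α - 1 : ℕ) : ℝ) ^ (-b γ) =
      n + 1 := by
  rw [setOf_busemann_eq_norm_le_eq_ballAvoiding hb, finsum_mem_coe_finset,
    ← sum_ballAvoiding_zpow_neg_norm a n]
  refine sum_congr rfl fun γ hγ => ?_
  rw [(hb γ).mpr (mem_ballAvoiding.mp hγ).2]

theorem finsum_zpow_neg_busemann_boundary_setOf_eq_norm_le [Nonempty α] {n : ℕ} (hn : 1 ≤ n) :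
    ∑ᶠ γ ∈ ({1} ∪ {γ ∈ {γ | b γ = norm γ ∧ norm γ ≤ n} | b γ = n} : Set (FreeGroup α)),
      ((2 * Fintype.card α - 1 : ℕ) : ℝ) ^ (-b γ) = 2 := by
  have hone : (1 : FreeGroup α) ∉ sphereAvoiding a n := fun h => by
    have := (mem_sphereAvoiding.mp h).1
    rw [norm_one] at this
    omega
  have hb1 : b 1 = 0 := by simpa using (hb 1).mpr (by simp)
  have hsphere : ∑ γ ∈ sphereAvoiding a n, ((2 * Fintype.card α - 1 : ℕ) : ℝ) ^ (-b γ) = 1 := by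
    rw [← sum_sphereAvoiding_zpow_neg_norm a n]
    refine sum_congr rfl fun γ hγ => ?_
    rw [(hb γ).mpr (mem_sphereAvoiding.mp hγ).2]
  rw [sep_busemann_eq_eq_sphereAvoiding hb, Set.singleton_union, ← coe_insert,
    finsum_mem_coe_finset, sum_insert hone, hsphere, hb1, neg_zero, zpow_zero]
  norm_num

end BusemannSets

end FreeGroup

/-- The sets A_n^x = {γ⁻¹·x : 0 ≤ b_x(γ) = d(1,γ) ≤ n} (encoded by their group elements)
have weighted measure |A_n^x|_x = n + 1, their boundaries ∂A_n^x = {1} ∪ (A_n^x ∩ H_n(x))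
have weighted measure 2 (for n ≥ 1), hence the isoperimetric ratio tends to 0:
(A_n^x) is a δ-averaging (δ-Følner) sequence. -/
theorem stmt12
    (d : FreeGroup Bool → FreeGroup Bool → ℕ)
    (hd : ∀ g h, d g h = ((g⁻¹ * h).toWord).length)
    (x : ℕ → Bool × Bool)
    (hred : ∀ n, x (n + 1) ≠ ((x n).1, !(x n).2))
    (b : FreeGroup Bool → ℤ)
    (hb : ∀ γ : FreeGroup Bool,
      Tendsto (fun n => (d γ (FreeGroup.mk (List.ofFn fun i : Fin n => x i)) : ℤ) -
          (d 1 (FreeGroup.mk (List.ofFn fun i : Fin n => x i)) : ℤ))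
        atTop (𝓝 (b γ)))
    (A : ℕ → Set (FreeGroup Bool))
    (hA : ∀ n, A n = {γ | b γ = (d 1 γ : ℤ) ∧ d 1 γ ≤ n}) :
    (∀ n : ℕ, (∑ᶠ γ ∈ A n, (3 : ℝ) ^ (-(b γ))) = n + 1) ∧
      (∀ n : ℕ, 1 ≤ n →
        (∑ᶠ γ ∈ ({1} ∪ {γ ∈ A n | b γ = (n : ℤ)} : Set (FreeGroup Bool)),
          (3 : ℝ) ^ (-(b γ))) = 2) ∧
      Tendsto (fun n : ℕ =>
          (∑ᶠ γ ∈ ({1} ∪ {γ ∈ A n | b γ = (n : ℤ)} : Set (FreeGroup Bool)),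
            (3 : ℝ) ^ (-(b γ))) / ∑ᶠ γ ∈ A n, (3 : ℝ) ^ (-(b γ)))
        atTop (𝓝 0) := by
  have hd1 : ∀ γ, d 1 γ = γ.norm := fun γ => by rw [hd, inv_one, one_mul, FreeGroup.norm]
  have hbusemann : ∀ γ, b γ = γ.norm ↔ γ.toWord.head? ≠ some (x 0) := fun γ =>
    FreeGroup.busemann_eq_norm_iff hred
      (by simpa only [hd, inv_one, one_mul, FreeGroup.norm] using hb γ)
  have hq : ((2 * Fintype.card Bool - 1 : ℕ) : ℝ) = 3 := by norm_num
  obtain rfl : A = fun n => {γ | b γ = γ.norm ∧ γ.norm ≤ n} :=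
    funext fun n => by simp only [hA, hd1]
  have hvolume := FreeGroup.finsum_zpow_neg_busemann_setOf_eq_norm_le hbusemann
  have hboundary : ∀ n : ℕ, 1 ≤ n → _ := fun n hn =>
    FreeGroup.finsum_zpow_neg_busemann_boundary_setOf_eq_norm_le hbusemann hn
  rw [hq] at hvolume hboundary
  refine ⟨hvolume, hboundary, ?_⟩
  have hratio : Tendsto (fun n : ℕ => (2 : ℝ) / (n + 1)) atTop (𝓝 0) :=
    tendsto_const_nhds.div_atTop (tendsto_atTop_add_const_right _ 1 tendsto_natCast_atTop_atTop)
  refine hratio.congr' (eventually_atTop.mpr ⟨1, fun n hn => ?_⟩)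
  dsimp only
  rw [hboundary n hn, hvolume n]
end

section
/- In the upper half-plane with the modified area form y·(dx∧dy)/y² = (dx∧dy)/y (the hyperbolic area weighted by the density y relative to base point i), the region V_n = {x+iy : −1 ≤ x ≤ 1, e^{−n} ≤ y ≤ 1} has modified area 2n, while the modified length of its boundary (with modified length element √(dx²+dy²)) is 2(2 + (1 − e^{−n})) ≤ 6. Hence length(∂V_n)/area(V_n) → 0 as n → ∞. -/
open Filter Topology

/-- The modified length of a curve σ(t) = (x(t), y(t)) on a ≤ t ≤ b:
∫ₐᵇ √(x'(t)² + y'(t)²) dt. -/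
noncomputable def modLength (c : ℝ → ℝ × ℝ) (a b : ℝ) : ℝ :=
  ∫ t in a..b, Real.sqrt ((deriv (fun s => (c s).1) t) ^ 2 +
    (deriv (fun s => (c s).2) t) ^ 2)

lemma modLength_horiz (c a b : ℝ) : modLength (fun t => (t, c)) a b = b - a := by
  simp [modLength]

lemma modLength_vert (c a b : ℝ) : modLength (fun t => (c, t)) a b = b - a := by
  simp [modLength]

lemma area_eq (n : ℕ) :
    (∫ x in (-1 : ℝ)..1, ∫ y in Real.exp (-(n : ℝ))..1, 1 / y) = 2 * n := by
  have hpos := Real.exp_pos (-(n : ℝ))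
  have h1 : (∫ y in Real.exp (-(n : ℝ))..1, 1 / y) = (n : ℝ) := by
    rw [integral_one_div_of_pos hpos one_pos, one_div, Real.log_inv, Real.log_exp]; ring
  rw [h1, intervalIntegral.integral_const, smul_eq_mul]
  ring

/-- In the upper half-plane with modified area form dx∧dy/y, the rectangle
V_n = [−1,1] × [e^{−n},1] has modified area 2n, while the modified length of its
boundary is 2(2 + (1 − e^{−n})) ≤ 6; hence length(∂V_n)/area(V_n) → 0. -/
theorem stmt15 :
    (∀ n : ℕ, (∫ x in (-1 : ℝ)..1, ∫ y in Real.exp (-(n : ℝ))..1, 1 / y) = 2 * n) ∧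
      (∀ n : ℕ,
        modLength (fun t => (t, Real.exp (-(n : ℝ)))) (-1) 1 +
            modLength (fun t => (t, 1)) (-1) 1 +
            modLength (fun t => (-1, t)) (Real.exp (-(n : ℝ))) 1 +
            modLength (fun t => (1, t)) (Real.exp (-(n : ℝ))) 1 =
          2 * (2 + (1 - Real.exp (-(n : ℝ)))) ∧
        2 * (2 + (1 - Real.exp (-(n : ℝ)))) ≤ 6) ∧
      Tendsto (fun n : ℕ => 2 * (2 + (1 - Real.exp (-(n : ℝ)))) /
          (∫ x in (-1 : ℝ)..1, ∫ y in Real.exp (-(n : ℝ))..1, 1 / y))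
        atTop (𝓝 0) := by
  refine ⟨area_eq, ?_, ?_⟩
  · intro n
    have hpos := Real.exp_pos (-(n : ℝ))
    have hle : Real.exp (-(n : ℝ)) ≤ 1 := Real.exp_le_one_iff.mpr (neg_nonpos.mpr (Nat.cast_nonneg n))
    constructor
    · rw [modLength_horiz, modLength_horiz, modLength_vert, modLength_vert]; ring
    · linarith
  · simp only [area_eq]
    have hexp : Tendsto (fun n : ℕ => Real.exp (-(n : ℝ))) atTop (𝓝 0) :=
      Real.tendsto_exp_atBot.comp
        (tendsto_neg_atTop_atBot.comp tendsto_natCast_atTop_atTop)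
    have hnum : Tendsto (fun n : ℕ => 2 * (2 + (1 - Real.exp (-(n : ℝ)))))
        atTop (𝓝 6) := by
      have : Tendsto (fun n : ℕ => 2 * (2 + (1 - Real.exp (-(n : ℝ)))))
          atTop (𝓝 (2 * (2 + (1 - 0)))) :=
        (tendsto_const_nhds.add (tendsto_const_nhds.sub hexp)).const_mul 2
      have h6 : (6:ℝ) = 2 * (2 + (1 - 0)) := by norm_num
      rwa [h6]
    have hden : Tendsto (fun n : ℕ => 2 * (n : ℝ)) atTop atTop :=
      tendsto_natCast_atTop_atTop.const_mul_atTop (by norm_num)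
    exact hnum.div_atTop hden
end
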